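/- Let Ĝ be a signed complete bigraph, i.e. a signed bigraph whose underlying graph is a complete bipartite graph. Then Ĝ is a chordal signed bigraph if and only if Ĝ does not contain any signed graph belonging to F_1 ∪ F_2 ∪ F_3 ∪ F_4 as an induced subgraph. -/

import Mathlib

universe u

/-! ## Basic unsigned notions for bipartite graphs -/

/-- `G` has an induced cycle of length at least 6 (signs, if any, are arbitrary). -/
def HasLongInducedCycle {V : Type u} (G : SimpleGraph V) : Prop :=
  ∃ n : ℕ, 6 ≤ n ∧ ∃ f : ZMod n → V, Function.Injective f ∧
    ∀ i j : ZMod n, G.Adj (f i) (f j) ↔ (j = i + 1 ∨ i = j + 1)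

/-- A graph is separable if it contains an induced `2K₂`. -/
def IsSeparableGraph {V : Type u} (G : SimpleGraph V) : Prop :=
  ∃ a b c d : V, [a, b, c, d].Pairwise (· ≠ ·) ∧
    G.Adj a b ∧ G.Adj c d ∧ ¬ G.Adj a c ∧ ¬ G.Adj a d ∧ ¬ G.Adj b c ∧ ¬ G.Adj b d

/-- An edge `ab` of a bipartite graph is simplicial if every vertex of `N(a) - {b}`
is adjacent to every vertex of `N(b) - {a}`. -/
def SimplicialEdge {V : Type u} (G : SimpleGraph V) (a b : V) : Prop :=
  G.Adj a b ∧ ∀ c ∈ G.neighborSet a \ {b}, ∀ d ∈ G.neighborSet b \ {a}, G.Adj c d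

/-- A canonical ordering of a bigraph with bipartition given by `side`
(`X` is the `side = true` part, `Y` the `side = false` part): the neighbourhoods of
the `x`'s are decreasing and those of the `y`'s are increasing. -/
def IsCanonicalOrdering {V : Type u} (G : SimpleGraph V) (side : V → Bool)
    {α β : ℕ} (x : Fin α → V) (y : Fin β → V) : Prop :=
  Function.Injective x ∧ Function.Injective y ∧
  (∀ w : V, side w = true ↔ w ∈ Set.range x) ∧
  (∀ w : V, side w = false ↔ w ∈ Set.range y) ∧
  (∀ i j : Fin α, i ≤ j → G.neighborSet (x j) ⊆ G.neighborSet (x i)) ∧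
  (∀ i j : Fin β, i ≤ j → G.neighborSet (y i) ⊆ G.neighborSet (y j))

/-- `H` is a non-trivial (i.e. containing at least one edge) connected component
of `G - S`. -/
def IsNontrivialComponentOf {V : Type u} (G : SimpleGraph V) (S H : Set V) : Prop :=
  H ⊆ Sᶜ ∧ (G.induce H).Connected ∧
  (∀ a ∈ H, ∀ b ∈ Sᶜ, G.Adj a b → b ∈ H) ∧
  (∃ a ∈ H, ∃ b ∈ H, G.Adj a b)

/-- `S` minimally separates the non-trivial components `H` and `H'` of `G - S`:
every vertex of `S` has a neighbour in `H` and a neighbour in `H'`. -/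
def MinimallySeparates {V : Type u} (G : SimpleGraph V) (S H H' : Set V) : Prop :=
  IsNontrivialComponentOf G S H ∧ IsNontrivialComponentOf G S H' ∧ H ≠ H' ∧
  ∀ s ∈ S, (∃ a ∈ H, G.Adj s a) ∧ (∃ a ∈ H', G.Adj s a)

/-! ## Signed bigraphs -/

/-- A signed bigraph: a bipartite graph (with bipartition recorded by `side`)
whose edges carry a sign (`true` = positive, `false` = negative). -/
structure SignedBigraph (V : Type u) where
  graph : SimpleGraph V
  sign : V → V → Bool
  sign_symm : ∀ a b : V, sign a b = sign b a
  side : V → Bool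
  bipartite : ∀ ⦃a b : V⦄, graph.Adj a b → side a ≠ side b

namespace SignedBigraph

variable {V : Type u}

def Adj (G : SignedBigraph V) (a b : V) : Prop := G.graph.Adj a b

/-- `N(ab) = (N(a) ∪ N(b)) - {a, b}`. -/
def edgeNbhd (G : SignedBigraph V) (a b : V) : Set V :=
  (G.graph.neighborSet a ∪ G.graph.neighborSet b) \ {a, b}

/-- The edge `ab` is signed simplicial: `N(ab)` induces a positive biclique. -/
def SignedSimplicial (G : SignedBigraph V) (a b : V) : Prop :=
  G.Adj a b ∧
    ∀ c ∈ G.edgeNbhd a b, ∀ d ∈ G.edgeNbhd a b,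
      G.side c ≠ G.side d → (G.Adj c d ∧ G.sign c d = true)

/-- Delete a set of edges from a signed bigraph (keeping all vertices). -/
def deleteEdges (G : SignedBigraph V) (s : Set (Sym2 V)) : SignedBigraph V where
  graph := G.graph.deleteEdges s
  sign := G.sign
  sign_symm := G.sign_symm
  side := G.side
  bipartite := by
    intro a b h
    exact G.bipartite (SimpleGraph.deleteEdges_adj.mp h).1

/-- The induced signed subgraph on a set of vertices. -/
def induce (G : SignedBigraph V) (A : Set V) : SignedBigraph A where
  graph := G.graph.induce A
  sign a b := G.sign a b
  sign_symm a b := G.sign_symm a b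
  side a := G.side a
  bipartite := by
    intro a b h
    exact G.bipartite h

/-- A chordal signed bigraph: the edges can be ordered `e₁, …, e_m` so that each `eᵢ`
is a signed simplicial edge of the signed bigraph obtained by deleting `e₁, …, e_{i-1}`. -/
def IsChordal (G : SignedBigraph V) : Prop :=
  ∃ l : List (Sym2 V), l.Nodup ∧ (∀ e, e ∈ G.graph.edgeSet ↔ e ∈ l) ∧
    ∀ (i : ℕ) (h : i < l.length), ∃ a b : V,
      l.get ⟨i, h⟩ = s(a, b) ∧
      (G.deleteEdges {e | e ∈ l.take i}).SignedSimplicial a b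

/-! ## Forbidden patterns F₁ – F₆, D, long cycles -/

/-- `G` contains the all-negative 4-cycle `F₁` as an induced subgraph. -/
def HasF1 (G : SignedBigraph V) : Prop :=
  ∃ u1 u2 v1 v2 : V,
    [u1, u2, v1, v2].Pairwise (· ≠ ·) ∧
    G.Adj u1 v1 ∧ G.Adj u1 v2 ∧ G.Adj u2 v1 ∧ G.Adj u2 v2 ∧
    ¬ G.Adj u1 u2 ∧ ¬ G.Adj v1 v2 ∧
    G.sign u1 v1 = false ∧ G.sign u1 v2 = false ∧
    G.sign u2 v1 = false ∧ G.sign u2 v2 = false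

/-- `G` contains a member of `F₂` (a signed `K_{2,3}`) as an induced subgraph. -/
def HasF2 (G : SignedBigraph V) : Prop :=
  ∃ u1 u2 v1 v2 v3 : V,
    [u1, u2, v1, v2, v3].Pairwise (· ≠ ·) ∧
    G.Adj u1 v1 ∧ G.Adj u1 v2 ∧ G.Adj u1 v3 ∧
    G.Adj u2 v1 ∧ G.Adj u2 v2 ∧ G.Adj u2 v3 ∧
    ¬ G.Adj u1 u2 ∧ ¬ G.Adj v1 v2 ∧ ¬ G.Adj v1 v3 ∧ ¬ G.Adj v2 v3 ∧
    G.sign u1 v1 = false ∧ G.sign u1 v2 = false ∧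
    G.sign u2 v2 = false ∧ G.sign u2 v3 = false

/-- `G` contains a member of `F₃` (a signed `K_{2,4}`) as an induced subgraph. -/
def HasF3 (G : SignedBigraph V) : Prop :=
  ∃ u1 u2 v1 v2 v3 v4 : V,
    [u1, u2, v1, v2, v3, v4].Pairwise (· ≠ ·) ∧
    G.Adj u1 v1 ∧ G.Adj u1 v2 ∧ G.Adj u1 v3 ∧ G.Adj u1 v4 ∧
    G.Adj u2 v1 ∧ G.Adj u2 v2 ∧ G.Adj u2 v3 ∧ G.Adj u2 v4 ∧
    ¬ G.Adj u1 u2 ∧ ¬ G.Adj v1 v2 ∧ ¬ G.Adj v1 v3 ∧ ¬ G.Adj v1 v4 ∧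
    ¬ G.Adj v2 v3 ∧ ¬ G.Adj v2 v4 ∧ ¬ G.Adj v3 v4 ∧
    G.sign u1 v1 = false ∧ G.sign u1 v2 = false ∧
    G.sign u2 v3 = false ∧ G.sign u2 v4 = false

/-- `G` contains a member of `F₄` (a signed `K_{3,3}` with negative perfect matching)
as an induced subgraph. -/
def HasF4 (G : SignedBigraph V) : Prop :=
  ∃ u1 u2 u3 v1 v2 v3 : V,
    [u1, u2, u3, v1, v2, v3].Pairwise (· ≠ ·) ∧
    G.Adj u1 v1 ∧ G.Adj u1 v2 ∧ G.Adj u1 v3 ∧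
    G.Adj u2 v1 ∧ G.Adj u2 v2 ∧ G.Adj u2 v3 ∧
    G.Adj u3 v1 ∧ G.Adj u3 v2 ∧ G.Adj u3 v3 ∧
    ¬ G.Adj u1 u2 ∧ ¬ G.Adj u1 u3 ∧ ¬ G.Adj u2 u3 ∧
    ¬ G.Adj v1 v2 ∧ ¬ G.Adj v1 v3 ∧ ¬ G.Adj v2 v3 ∧
    G.sign u1 v1 = false ∧ G.sign u2 v2 = false ∧ G.sign u3 v3 = false

/-- `G` contains a member of `F₅` as an induced subgraph. -/
def HasF5 (G : SignedBigraph V) : Prop :=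
  ∃ x1 x2 x3 y1 y2 y3 : V,
    [x1, x2, x3, y1, y2, y3].Pairwise (· ≠ ·) ∧
    G.Adj x1 y1 ∧ G.Adj x1 y2 ∧ ¬ G.Adj x1 y3 ∧
    G.Adj x2 y1 ∧ G.Adj x2 y2 ∧ G.Adj x2 y3 ∧
    G.Adj x3 y1 ∧ G.Adj x3 y2 ∧ G.Adj x3 y3 ∧
    ¬ G.Adj x1 x2 ∧ ¬ G.Adj x1 x3 ∧ ¬ G.Adj x2 x3 ∧
    ¬ G.Adj y1 y2 ∧ ¬ G.Adj y1 y3 ∧ ¬ G.Adj y2 y3 ∧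
    G.sign x2 y1 = false ∧ G.sign x3 y2 = false

/-- `G` contains a member of `F₆` as an induced subgraph. -/
def HasF6 (G : SignedBigraph V) : Prop :=
  ∃ x1 x2 x3 x4 y1 y2 y3 y4 : V,
    [x1, x2, x3, x4, y1, y2, y3, y4].Pairwise (· ≠ ·) ∧
    G.Adj x1 y1 ∧ G.Adj x1 y2 ∧ ¬ G.Adj x1 y3 ∧ ¬ G.Adj x1 y4 ∧
    G.Adj x2 y1 ∧ G.Adj x2 y2 ∧ ¬ G.Adj x2 y3 ∧ ¬ G.Adj x2 y4 ∧
    G.Adj x3 y1 ∧ G.Adj x3 y2 ∧ G.Adj x3 y3 ∧ G.Adj x3 y4 ∧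
    G.Adj x4 y1 ∧ G.Adj x4 y2 ∧ G.Adj x4 y3 ∧ G.Adj x4 y4 ∧
    ¬ G.Adj x1 x2 ∧ ¬ G.Adj x1 x3 ∧ ¬ G.Adj x1 x4 ∧
    ¬ G.Adj x2 x3 ∧ ¬ G.Adj x2 x4 ∧ ¬ G.Adj x3 x4 ∧
    ¬ G.Adj y1 y2 ∧ ¬ G.Adj y1 y3 ∧ ¬ G.Adj y1 y4 ∧
    ¬ G.Adj y2 y3 ∧ ¬ G.Adj y2 y4 ∧ ¬ G.Adj y3 y4 ∧
    G.sign x1 y1 = false ∧ G.sign x2 y1 = false ∧ G.sign x3 y2 = false ∧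
    G.sign x4 y3 = false ∧ G.sign x4 y4 = false

/-- `G` contains a member of `D` (a 6-cycle `x₁y₁x₂y₃x₃y₂x₁` plus a negative chord
`x₂y₂`) as an induced subgraph. -/
def HasD (G : SignedBigraph V) : Prop :=
  ∃ x1 x2 x3 y1 y2 y3 : V,
    [x1, x2, x3, y1, y2, y3].Pairwise (· ≠ ·) ∧
    G.Adj x1 y1 ∧ G.Adj y1 x2 ∧ G.Adj x2 y3 ∧ G.Adj y3 x3 ∧
    G.Adj x3 y2 ∧ G.Adj y2 x1 ∧
    G.Adj x2 y2 ∧ G.sign x2 y2 = false ∧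
    ¬ G.Adj x1 y3 ∧ ¬ G.Adj x3 y1 ∧
    ¬ G.Adj x1 x2 ∧ ¬ G.Adj x1 x3 ∧ ¬ G.Adj x2 x3 ∧
    ¬ G.Adj y1 y2 ∧ ¬ G.Adj y1 y3 ∧ ¬ G.Adj y2 y3

/-- `G` contains an induced signed cycle of length at least 6. -/
def HasLongCycle (G : SignedBigraph V) : Prop :=
  HasLongInducedCycle G.graph

/-! ## Minimal forbidden patterns M₁ – M₅ for complete bigraphs -/

def HasM1 (G : SignedBigraph V) : Prop := G.HasF1

def HasM2 (G : SignedBigraph V) : Prop :=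
  ∃ u1 u2 v1 v2 v3 : V,
    [u1, u2, v1, v2, v3].Pairwise (· ≠ ·) ∧
    G.Adj u1 v1 ∧ G.Adj u1 v2 ∧ G.Adj u1 v3 ∧
    G.Adj u2 v1 ∧ G.Adj u2 v2 ∧ G.Adj u2 v3 ∧
    ¬ G.Adj u1 u2 ∧ ¬ G.Adj v1 v2 ∧ ¬ G.Adj v1 v3 ∧ ¬ G.Adj v2 v3 ∧
    G.sign u1 v1 = false ∧ G.sign u1 v2 = false ∧
    G.sign u2 v2 = false ∧ G.sign u2 v3 = false ∧
    G.sign u1 v3 = true ∧ G.sign u2 v1 = true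

def HasM3 (G : SignedBigraph V) : Prop :=
  ∃ u1 u2 v1 v2 v3 v4 : V,
    [u1, u2, v1, v2, v3, v4].Pairwise (· ≠ ·) ∧
    G.Adj u1 v1 ∧ G.Adj u1 v2 ∧ G.Adj u1 v3 ∧ G.Adj u1 v4 ∧
    G.Adj u2 v1 ∧ G.Adj u2 v2 ∧ G.Adj u2 v3 ∧ G.Adj u2 v4 ∧
    ¬ G.Adj u1 u2 ∧ ¬ G.Adj v1 v2 ∧ ¬ G.Adj v1 v3 ∧ ¬ G.Adj v1 v4 ∧
    ¬ G.Adj v2 v3 ∧ ¬ G.Adj v2 v4 ∧ ¬ G.Adj v3 v4 ∧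
    G.sign u1 v1 = false ∧ G.sign u1 v2 = false ∧
    G.sign u2 v3 = false ∧ G.sign u2 v4 = false ∧
    G.sign u1 v3 = true ∧ G.sign u1 v4 = true ∧
    G.sign u2 v1 = true ∧ G.sign u2 v2 = true

def HasM4 (G : SignedBigraph V) : Prop :=
  ∃ u1 u2 u3 v1 v2 v3 : V,
    [u1, u2, u3, v1, v2, v3].Pairwise (· ≠ ·) ∧
    G.Adj u1 v1 ∧ G.Adj u1 v2 ∧ G.Adj u1 v3 ∧
    G.Adj u2 v1 ∧ G.Adj u2 v2 ∧ G.Adj u2 v3 ∧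
    G.Adj u3 v1 ∧ G.Adj u3 v2 ∧ G.Adj u3 v3 ∧
    ¬ G.Adj u1 u2 ∧ ¬ G.Adj u1 u3 ∧ ¬ G.Adj u2 u3 ∧
    ¬ G.Adj v1 v2 ∧ ¬ G.Adj v1 v3 ∧ ¬ G.Adj v2 v3 ∧
    G.sign u1 v1 = false ∧ G.sign u2 v2 = false ∧ G.sign u3 v3 = false ∧
    G.sign u1 v2 = true ∧ G.sign u1 v3 = true ∧ G.sign u2 v1 = true ∧
    G.sign u2 v3 = true ∧ G.sign u3 v1 = true ∧ G.sign u3 v2 = true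

def HasM5 (G : SignedBigraph V) : Prop :=
  ∃ x1 x2 x3 y1 y2 y3 : V,
    [x1, x2, x3, y1, y2, y3].Pairwise (· ≠ ·) ∧
    G.Adj x1 y1 ∧ G.Adj x1 y2 ∧ G.Adj x1 y3 ∧
    G.Adj x2 y1 ∧ G.Adj x2 y2 ∧ G.Adj x2 y3 ∧
    G.Adj x3 y1 ∧ G.Adj x3 y2 ∧ G.Adj x3 y3 ∧
    ¬ G.Adj x1 x2 ∧ ¬ G.Adj x1 x3 ∧ ¬ G.Adj x2 x3 ∧
    ¬ G.Adj y1 y2 ∧ ¬ G.Adj y1 y3 ∧ ¬ G.Adj y2 y3 ∧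
    G.sign x1 y1 = false ∧ G.sign x1 y2 = false ∧
    G.sign x2 y2 = false ∧ G.sign x3 y3 = false ∧
    G.sign x1 y3 = true ∧ G.sign x2 y1 = true ∧ G.sign x2 y3 = true ∧
    G.sign x3 y1 = true ∧ G.sign x3 y2 = true

/-! ## The patterns W₁ – W₆ (relativized to an ambient vertex set `A`, with the
distinguished vertices being exactly the vertices in `S`). -/

def HasW1In (G : SignedBigraph V) (A S : Set V) : Prop :=
  ∃ u y x z : V, u ∈ A ∧ y ∈ A ∧ x ∈ A ∧ z ∈ A ∧
    [u, y, x, z].Pairwise (· ≠ ·) ∧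
    G.Adj u y ∧ G.Adj u z ∧ G.Adj x y ∧ G.Adj x z ∧
    ¬ G.Adj u x ∧ ¬ G.Adj y z ∧
    G.sign x y = false ∧ G.sign x z = false ∧
    x ∈ S ∧ u ∉ S ∧ y ∉ S ∧ z ∉ S

def HasW2In (G : SignedBigraph V) (A S : Set V) : Prop :=
  ∃ u y v z p : V, u ∈ A ∧ y ∈ A ∧ v ∈ A ∧ z ∈ A ∧ p ∈ A ∧
    [u, y, v, z, p].Pairwise (· ≠ ·) ∧
    G.Adj u y ∧ G.Adj u z ∧ G.Adj v y ∧ G.Adj v z ∧ G.Adj p v ∧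
    ¬ G.Adj u v ∧ ¬ G.Adj y z ∧ ¬ G.Adj p u ∧ ¬ G.Adj p y ∧ ¬ G.Adj p z ∧
    G.sign v y = false ∧ G.sign v z = false ∧
    p ∈ S ∧ u ∉ S ∧ y ∉ S ∧ v ∉ S ∧ z ∉ S

def HasW3In (G : SignedBigraph V) (A S : Set V) : Prop :=
  ∃ u y v z p : V, u ∈ A ∧ y ∈ A ∧ v ∈ A ∧ z ∈ A ∧ p ∈ A ∧
    [u, y, v, z, p].Pairwise (· ≠ ·) ∧
    G.Adj u y ∧ G.Adj u z ∧ G.Adj v y ∧ G.Adj v z ∧ G.Adj p v ∧ G.Adj p u ∧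
    ¬ G.Adj u v ∧ ¬ G.Adj y z ∧ ¬ G.Adj p y ∧ ¬ G.Adj p z ∧
    G.sign v y = false ∧ G.sign v z = false ∧ G.sign p u = false ∧
    p ∈ S ∧ u ∉ S ∧ y ∉ S ∧ v ∉ S ∧ z ∉ S

def HasW4In (G : SignedBigraph V) (A S : Set V) : Prop :=
  ∃ u y c z p q : V, u ∈ A ∧ y ∈ A ∧ c ∈ A ∧ z ∈ A ∧ p ∈ A ∧ q ∈ A ∧
    [u, y, c, z, p, q].Pairwise (· ≠ ·) ∧
    G.Adj u y ∧ G.Adj u z ∧ G.Adj c y ∧ G.Adj c z ∧ G.Adj p c ∧ G.Adj p u ∧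
    G.Adj q p ∧
    ¬ G.Adj u c ∧ ¬ G.Adj y z ∧ ¬ G.Adj p y ∧ ¬ G.Adj p z ∧
    ¬ G.Adj q u ∧ ¬ G.Adj q y ∧ ¬ G.Adj q c ∧ ¬ G.Adj q z ∧
    G.sign c y = false ∧ G.sign c z = false ∧ G.sign p u = false ∧
    q ∈ S ∧ u ∉ S ∧ y ∉ S ∧ c ∉ S ∧ z ∉ S ∧ p ∉ S

def HasW5In (G : SignedBigraph V) (A S : Set V) : Prop :=
  ∃ u y v z x : V, u ∈ A ∧ y ∈ A ∧ v ∈ A ∧ z ∈ A ∧ x ∈ A ∧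
    [u, y, v, z, x].Pairwise (· ≠ ·) ∧
    G.Adj u y ∧ G.Adj u z ∧ G.Adj v y ∧ G.Adj v z ∧ G.Adj x v ∧ G.Adj x u ∧
    ¬ G.Adj u v ∧ ¬ G.Adj y z ∧ ¬ G.Adj x y ∧ ¬ G.Adj x z ∧
    G.sign v y = false ∧ G.sign x u = false ∧
    x ∈ S ∧ y ∈ S ∧ u ∉ S ∧ v ∉ S ∧ z ∉ S

def HasW6In (G : SignedBigraph V) (A S : Set V) : Prop :=
  ∃ u y v z x : V, u ∈ A ∧ y ∈ A ∧ v ∈ A ∧ z ∈ A ∧ x ∈ A ∧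
    [u, y, v, z, x].Pairwise (· ≠ ·) ∧
    G.Adj u y ∧ G.Adj u z ∧ G.Adj v y ∧ G.Adj v z ∧ G.Adj x v ∧
    ¬ G.Adj u v ∧ ¬ G.Adj y z ∧ ¬ G.Adj x u ∧ ¬ G.Adj x y ∧ ¬ G.Adj x z ∧
    G.sign v y = false ∧
    x ∈ S ∧ y ∈ S ∧ u ∉ S ∧ v ∉ S ∧ z ∉ S

/-! ## Tadpoles, sums and joins -/

/-- The vertex set of a tadpole with heads `w, y, z` and path vertices `x`. -/
def tadVerts {n : ℕ} (w y z : V) (x : Fin n → V) : Set V :=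
  {w, y, z} ∪ Set.range x

/-- The data `(w, y, z, x)` forms an induced tadpole in `G`:
`w, y, z, x ⟨k⟩` induce a 4-cycle whose edges `x ⟨k⟩ y` and `x ⟨k⟩ z` are negative,
together with the induced path `x ⟨k⟩, x ⟨k-1⟩, …, x 0`; the vertex `x 0` is the end
and `w, y, z` are the heads.  If `t2 = true` the tadpole is of type 2: there is
additionally a negative edge from `w` to `x ⟨k-1⟩`.
(The paper's parameter `k ≥ 1` corresponds to `k + 1` here.) -/
structure IsInducedTadpole (G : SignedBigraph V) (k : ℕ) (t2 : Bool)
    (w y z : V) (x : Fin (k + 1) → V) : Prop where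
  t2_len : t2 = true → 1 ≤ k
  inj : Function.Injective x
  w_notmem : ∀ i, w ≠ x i
  y_notmem : ∀ i, y ≠ x i
  z_notmem : ∀ i, z ≠ x i
  wy : w ≠ y
  wz : w ≠ z
  yz : y ≠ z
  adj_wy : G.Adj w y
  adj_wz : G.Adj w z
  not_adj_yz : ¬ G.Adj y z
  adj_path : ∀ i j : Fin (k + 1), G.Adj (x i) (x j) ↔ (i.1 + 1 = j.1 ∨ j.1 + 1 = i.1)
  adj_y : ∀ i : Fin (k + 1), G.Adj y (x i) ↔ i.1 = k
  adj_z : ∀ i : Fin (k + 1), G.Adj z (x i) ↔ i.1 = k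
  adj_w : ∀ i : Fin (k + 1), G.Adj w (x i) ↔ (t2 = true ∧ i.1 + 1 = k)
  sign_y : ∀ i : Fin (k + 1), i.1 = k → G.sign (x i) y = false
  sign_z : ∀ i : Fin (k + 1), i.1 = k → G.sign (x i) z = false
  sign_w : ∀ i : Fin (k + 1), t2 = true → i.1 + 1 = k → G.sign w (x i) = false

/-- `G` contains a sum of two tadpoles (identified at their ends) as an induced
subgraph. -/
def HasTadpoleSum (G : SignedBigraph V) : Prop :=
  ∃ (k k' : ℕ) (t t' : Bool) (w y z w' y' z' : V)
    (x : Fin (k + 1) → V) (x' : Fin (k' + 1) → V),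
    G.IsInducedTadpole k t w y z x ∧ G.IsInducedTadpole k' t' w' y' z' x' ∧
    x 0 = x' 0 ∧
    tadVerts w y z x ∩ tadVerts w' y' z' x' = {x 0} ∧
    ∀ a ∈ tadVerts w y z x, ∀ b ∈ tadVerts w' y' z' x',
      a ≠ x 0 → b ≠ x' 0 → ¬ G.Adj a b

/-- `G` contains a join of two tadpoles as an induced subgraph: two disjoint induced
tadpoles such that the edges between them are exactly those joining the end of each
tadpole to all vertices of the other tadpole in the opposite partite set; all these
edges are positive, except that the edge from an end to the head `w` of the other
tadpole may be of either sign when that tadpole is a member of `W₁` (i.e. has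
`k = 0` and is of type 1), in which case the ends are required to be adjacent. -/
def HasTadpoleJoin (G : SignedBigraph V) : Prop :=
  ∃ (k k' : ℕ) (t t' : Bool) (w y z w' y' z' : V)
    (x : Fin (k + 1) → V) (x' : Fin (k' + 1) → V),
    G.IsInducedTadpole k t w y z x ∧ G.IsInducedTadpole k' t' w' y' z' x' ∧
    Disjoint (tadVerts w y z x) (tadVerts w' y' z' x') ∧
    (∀ a ∈ tadVerts w y z x, ∀ b ∈ tadVerts w' y' z' x',
      (G.Adj a b ↔ ((a = x 0 ∨ b = x' 0) ∧ G.side a ≠ G.side b))) ∧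
    ((k = 0 ∧ t = false) ∨ (k' = 0 ∧ t' = false) → G.side (x 0) ≠ G.side (x' 0)) ∧
    (∀ a ∈ tadVerts w y z x, ∀ b ∈ tadVerts w' y' z' x', G.Adj a b →
      ¬ (a = x 0 ∧ b = w' ∧ k' = 0 ∧ t' = false) →
      ¬ (a = w ∧ b = x' 0 ∧ k = 0 ∧ t = false) →
      G.sign a b = true)

/-- `G` contains a member of
`ℱ = F₁ ∪ F₂ ∪ F₃ ∪ F₄ ∪ F₅ ∪ F₆ ∪ 𝒞 ∪ D ∪ 𝒮 ∪ 𝒥` as an induced subgraph. -/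
def HasForbidden (G : SignedBigraph V) : Prop :=
  G.HasF1 ∨ G.HasF2 ∨ G.HasF3 ∨ G.HasF4 ∨ G.HasF5 ∨ G.HasF6 ∨
  G.HasLongCycle ∨ G.HasD ∨ G.HasTadpoleSum ∨ G.HasTadpoleJoin

/-- `G` is `ℱ`-free. -/
def FFree (G : SignedBigraph V) : Prop := ¬ G.HasForbidden

end SignedBigraph

/-! ## Concrete complete signed bipartite graphs (for the graphs M₁ – M₅) -/

/-- The complete bipartite graph on `Fin a ⊕ Fin b`. -/
def cbsGraph (a b : ℕ) : SimpleGraph (Fin a ⊕ Fin b) where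
  Adj u v := u.isLeft ≠ v.isLeft
  symm := ⟨fun _ _ h => Ne.symm h⟩
  loopless := ⟨fun _ h => h rfl⟩

def cbsSign {a b : ℕ} (sgn : Fin a → Fin b → Bool) :
    Fin a ⊕ Fin b → Fin a ⊕ Fin b → Bool
  | Sum.inl i, Sum.inr j => sgn i j
  | Sum.inr j, Sum.inl i => sgn i j
  | _, _ => true

/-- The complete signed bipartite graph with parts `Fin a`, `Fin b`, and signs given
by `sgn`. -/
def completeSignedBigraph (a b : ℕ) (sgn : Fin a → Fin b → Bool) :
    SignedBigraph (Fin a ⊕ Fin b) where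
  graph := cbsGraph a b
  sign := cbsSign sgn
  sign_symm := by
    intro u v
    cases u <;> cases v <;> rfl
  side := Sum.isLeft
  bipartite := fun _ _ h => h

/-- `M₁`: the all-negative 4-cycle. -/
def Mgraph1 : SignedBigraph (Fin 2 ⊕ Fin 2) :=
  completeSignedBigraph 2 2 (fun _ _ => false)

/-- `M₂`. -/
def Mgraph2 : SignedBigraph (Fin 2 ⊕ Fin 3) :=
  completeSignedBigraph 2 3
    (fun i j => ! decide ((i = 0 ∧ (j = 0 ∨ j = 1)) ∨ (i = 1 ∧ (j = 1 ∨ j = 2))))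

/-- `M₃`. -/
def Mgraph3 : SignedBigraph (Fin 2 ⊕ Fin 4) :=
  completeSignedBigraph 2 4
    (fun i j => ! decide ((i = 0 ∧ (j = 0 ∨ j = 1)) ∨ (i = 1 ∧ (j = 2 ∨ j = 3))))

/-- `M₄`. -/
def Mgraph4 : SignedBigraph (Fin 3 ⊕ Fin 3) :=
  completeSignedBigraph 3 3 (fun i j => ! decide ((i : ℕ) = (j : ℕ)))

/-- `M₅`. -/
def Mgraph5 : SignedBigraph (Fin 3 ⊕ Fin 3) :=
  completeSignedBigraph 3 3
    (fun i j => ! decide ((i = 0 ∧ (j = 0 ∨ j = 1)) ∨ (i = 1 ∧ j = 1) ∨ (i = 2 ∧ j = 2)))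

/-!
A complete signed bigraph is chordal iff its negative edges can all be covered by one vertex
`a` of the first part and one vertex `b` of the second. If they can, deleting the edges `xy`
in lexicographic order of `(x, y)`, with `a` and `b` ranked first, is a signed simplicial
ordering. Conversely, in a chordal ordering the first edge `x₀y₀` of a complete sub-bigraph
`U × W` is deleted while all of `U × W` is still present, so every negative edge of `U × W`
meets `x₀` or `y₀`; the members of `F₁`–`F₄` are complete bigraphs where this fails. Finally,
without `F₁`–`F₄` such a cover exists: two vertices on the same side never both have two
negative neighbours (`F₁`, `F₂`, `F₃`), and three disjoint negative edges form an `F₄`.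
-/

lemma List.mem_take_iff_lt_of_pairwise {α β : Type*} [LinearOrder β] {r : α → β} {l : List α}
    (hl : l.Pairwise (fun e e' => r e < r e')) {i : ℕ} (hi : i < l.length) {e : α} (he : e ∈ l) :
    e ∈ l.take i ↔ r e < r l[i] := by
  obtain ⟨j, hj, rfl⟩ := List.mem_iff_getElem.mp he
  have hlt : ∀ {m n} (hm : m < l.length) (hn : n < l.length), m < n → r l[m] < r l[n] :=
    fun hm hn hmn => List.pairwise_iff_getElem.mp hl _ _ hm hn hmn
  constructor
  · intro h
    obtain ⟨k, hk, hkj⟩ := List.mem_take_iff_getElem.mp h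
    rw [← hkj]
    exact hlt _ hi (lt_of_lt_of_le hk (min_le_left _ _))
  · intro h
    have hji : j < i := by
      by_contra hij
      rcases (not_lt.mp hij).lt_or_eq with hij | rfl
      · exact (hlt hi hj hij).asymm h
      · exact lt_irrefl _ h
    exact List.mem_take_iff_getElem.mpr ⟨j, lt_min hji hj, rfl⟩

namespace SignedBigraph

variable {V : Type u} {G : SignedBigraph V}

lemma Adj.symm {a b : V} (h : G.Adj a b) : G.Adj b a := SimpleGraph.Adj.symm h

lemma Adj.ne {a b : V} (h : G.Adj a b) : a ≠ b := G.graph.ne_of_adj h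

lemma edgeNbhd_comm (a b : V) : G.edgeNbhd a b = G.edgeNbhd b a := by
  rw [edgeNbhd, edgeNbhd, Set.union_comm, Set.pair_comm]

lemma SignedSimplicial.symm {a b : V} (h : G.SignedSimplicial a b) : G.SignedSimplicial b a :=
  ⟨h.1.symm, edgeNbhd_comm (G := G) a b ▸ h.2⟩

lemma signedSimplicial_of_sides {a b : V} (hab : G.Adj a b)
    (h : ∀ c ∈ G.edgeNbhd a b, ∀ d ∈ G.edgeNbhd a b,
      G.side c = true → G.side d = false → G.Adj c d ∧ G.sign c d = true) :
    G.SignedSimplicial a b := by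
  refine ⟨hab, fun c hc d hd hcd => ?_⟩
  cases hsc : G.side c
  · obtain ⟨hdc, hsign⟩ := h d hd c hc (by simpa [hsc] using hcd.symm) hsc
    exact ⟨hdc.symm, G.sign_symm c d ▸ hsign⟩
  · exact h c hc d hd hsc (by simpa [hsc] using hcd.symm)

lemma SignedSimplicial.sign_eq_true {a b c d : V} (h : G.SignedSimplicial a b)
    (hac : G.Adj a c) (hbd : G.Adj b d) (hcb : c ≠ b) (hda : d ≠ a) : G.sign c d = true := by
  have hside : G.side c ≠ G.side d := by
    have key : ∀ p q r s : Bool, p ≠ q → q ≠ r → r ≠ s → p ≠ s := by decide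
    exact key _ _ _ _ (G.bipartite hac).symm (G.bipartite h.1) (G.bipartite hbd)
  refine (h.2 c ?_ d ?_ hside).2
  · exact ⟨Or.inl hac, by simp [hac.ne.symm, hcb]⟩
  · exact ⟨Or.inr hbd, by simp [hbd.ne.symm, hda]⟩

lemma deleteEdges_adj {s : Set (Sym2 V)} {a b : V} :
    (G.deleteEdges s).Adj a b ↔ G.Adj a b ∧ s(a, b) ∉ s :=
  SimpleGraph.deleteEdges_adj

lemma deleteEdges_congr {s t : Set (Sym2 V)} (h : ∀ e ∈ G.graph.edgeSet, e ∈ s ↔ e ∈ t) :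
    G.deleteEdges s = G.deleteEdges t := by
  simp only [deleteEdges, SignedBigraph.mk.injEq, and_true]
  ext a b
  simp only [SimpleGraph.deleteEdges_adj]
  exact and_congr_right fun hab => not_congr (h _ hab)

theorem isChordal_of_rank [Finite V] {α : Type*} [LinearOrder α] (r : Sym2 V → α)
    (hr : Set.InjOn r G.graph.edgeSet)
    (hsimp : ∀ ⦃a b : V⦄, G.Adj a b →
      (G.deleteEdges {e | r e < r s(a, b)}).SignedSimplicial a b) :
    G.IsChordal := by
  classical
  let l := (Set.toFinite G.graph.edgeSet).toFinset.toList.mergeSort (fun e e' => r e ≤ r e')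
  have hmem : ∀ e, e ∈ G.graph.edgeSet ↔ e ∈ l := by simp [l]
  have hnodup : l.Nodup := (List.mergeSort_perm _ _).nodup_iff.mpr (Finset.nodup_toList _)
  have hsorted : l.Pairwise (fun e e' => r e < r e') := by
    have hle : l.Pairwise (fun e e' => r e ≤ r e') := by
      simpa using List.pairwise_mergeSort (le := fun e e' => decide (r e ≤ r e'))
        (fun _ _ _ h h' => by simpa using le_trans (by simpa using h) (by simpa using h'))
        (fun a b => by simpa using le_total (r a) (r b)) _
    refine (hle.and hnodup).imp_of_mem fun he he' ⟨hle, hne⟩ => hle.lt_of_ne fun h => hne ?_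
    exact hr ((hmem _).mpr he) ((hmem _).mpr he') h
  refine ⟨l, hnodup, hmem, fun i hi => ?_⟩
  obtain ⟨a, b, hab⟩ := Sym2.exists.mp ⟨l.get ⟨i, hi⟩, rfl⟩
  refine ⟨a, b, hab, ?_⟩
  have hadj : G.Adj a b := (hmem s(a, b)).mpr (hab ▸ List.get_mem l ⟨i, hi⟩)
  rw [deleteEdges_congr (s := {e | e ∈ l.take i}) (t := {e | r e < r s(a, b)}) fun e he =>
    (List.mem_take_iff_lt_of_pairwise hsorted hi ((hmem e).mp he)).trans (by simp [← hab])]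
  exact hsimp hadj

lemma isChordal_of_isEmpty [IsEmpty V] : G.IsChordal :=
  ⟨[], List.nodup_nil, fun e => isEmptyElim e, fun _ h => absurd h (by simp)⟩

def NegCoveredBy (G : SignedBigraph V) (U W : Set V) (a b : V) : Prop :=
  ∀ x ∈ U, ∀ y ∈ W, G.sign x y = false → x = a ∨ y = b

theorem IsChordal.exists_negCoveredBy (hc : G.IsChordal) {U W : Set V}
    (hUW : ∀ x ∈ U, ∀ y ∈ W, G.Adj x y) (hU : U.Nonempty) (hW : W.Nonempty) :
    ∃ a ∈ U, ∃ b ∈ W, G.NegCoveredBy U W a b := by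
  classical
  obtain ⟨l, -, hmem, hstep⟩ := hc
  have hP : ∃ i, ∃ h : i < l.length, ∃ x ∈ U, ∃ y ∈ W, l[i] = s(x, y) := by
    obtain ⟨x, hx⟩ := hU
    obtain ⟨y, hy⟩ := hW
    obtain ⟨i, hi, he⟩ := List.mem_iff_getElem.mp ((hmem s(x, y)).mp (hUW x hx y hy))
    exact ⟨i, hi, x, hx, y, hy, he⟩
  obtain ⟨hi, x₀, hx₀, y₀, hy₀, he⟩ := Nat.find_spec hP
  have hfirst : ∀ x ∈ U, ∀ y ∈ W, s(x, y) ∉ l.take (Nat.find hP) := by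
    intro x hx y hy hxy
    obtain ⟨j, hj, hje⟩ := List.mem_take_iff_getElem.mp hxy
    exact Nat.find_min hP (lt_of_lt_of_le hj (min_le_left _ _)) ⟨_, x, hx, y, hy, hje⟩
  obtain ⟨a, b, hab, hsimp⟩ := hstep _ hi
  have hsimp₀ : (G.deleteEdges {e | e ∈ l.take (Nat.find hP)}).SignedSimplicial x₀ y₀ := by
    rcases Sym2.eq_iff.mp (hab.symm.trans he) with ⟨rfl, rfl⟩ | ⟨rfl, rfl⟩
    exacts [hsimp, hsimp.symm]
  refine ⟨x₀, hx₀, y₀, hy₀, fun x hx y hy hneg => ?_⟩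
  by_contra! hne
  have hpos := hsimp₀.sign_eq_true (c := y) (d := x)
    (deleteEdges_adj.mpr ⟨hUW _ hx₀ _ hy, hfirst _ hx₀ _ hy⟩)
    (deleteEdges_adj.mpr ⟨(hUW _ hx _ hy₀).symm, Sym2.eq_swap ▸ hfirst _ hx _ hy₀⟩) hne.2 hne.1
  simp [deleteEdges, G.sign_symm y x, hneg] at hpos

theorem IsChordal.not_hasF1 (hc : G.IsChordal) : ¬ G.HasF1 := by
  rintro ⟨u₁, u₂, v₁, v₂, hne, h₁₁, h₁₂, h₂₁, h₂₂, -, -, s₁₁, s₁₂, s₂₁, s₂₂⟩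
  obtain ⟨a, -, b, -, hab⟩ := hc.exists_negCoveredBy (U := {u₁, u₂}) (W := {v₁, v₂})
    (by simp [*]) ⟨u₁, by simp⟩ ⟨v₁, by simp⟩
  have := hab u₁ (by simp) v₁ (by simp) s₁₁
  have := hab u₁ (by simp) v₂ (by simp) s₁₂
  have := hab u₂ (by simp) v₁ (by simp) s₂₁
  have := hab u₂ (by simp) v₂ (by simp) s₂₂
  grind [List.pairwise_cons]

theorem IsChordal.not_hasF2 (hc : G.IsChordal) : ¬ G.HasF2 := by
  rintro ⟨u₁, u₂, v₁, v₂, v₃, hne, h₁₁, h₁₂, h₁₃, h₂₁, h₂₂, h₂₃, -, -, -, -, s₁₁, s₁₂, s₂₂, s₂₃⟩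
  obtain ⟨a, -, b, -, hab⟩ := hc.exists_negCoveredBy (U := {u₁, u₂}) (W := {v₁, v₂, v₃})
    (by simp [*]) ⟨u₁, by simp⟩ ⟨v₁, by simp⟩
  have := hab u₁ (by simp) v₁ (by simp) s₁₁
  have := hab u₁ (by simp) v₂ (by simp) s₁₂
  have := hab u₂ (by simp) v₂ (by simp) s₂₂
  have := hab u₂ (by simp) v₃ (by simp) s₂₃
  grind [List.pairwise_cons]

theorem IsChordal.not_hasF3 (hc : G.IsChordal) : ¬ G.HasF3 := by
  rintro ⟨u₁, u₂, v₁, v₂, v₃, v₄, hne, h₁₁, h₁₂, h₁₃, h₁₄, h₂₁, h₂₂, h₂₃, h₂₄, -, -, -, -, -, -, -,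
    s₁₁, s₁₂, s₂₃, s₂₄⟩
  obtain ⟨a, -, b, -, hab⟩ := hc.exists_negCoveredBy (U := {u₁, u₂}) (W := {v₁, v₂, v₃, v₄})
    (by simp [*]) ⟨u₁, by simp⟩ ⟨v₁, by simp⟩
  have := hab u₁ (by simp) v₁ (by simp) s₁₁
  have := hab u₁ (by simp) v₂ (by simp) s₁₂
  have := hab u₂ (by simp) v₃ (by simp) s₂₃
  have := hab u₂ (by simp) v₄ (by simp) s₂₄
  grind [List.pairwise_cons]

theorem IsChordal.not_hasF4 (hc : G.IsChordal) : ¬ G.HasF4 := by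
  rintro ⟨u₁, u₂, u₃, v₁, v₂, v₃, hne, h₁₁, h₁₂, h₁₃, h₂₁, h₂₂, h₂₃, h₃₁, h₃₂, h₃₃, -, -, -, -, -, -,
    s₁₁, s₂₂, s₃₃⟩
  obtain ⟨a, -, b, -, hab⟩ := hc.exists_negCoveredBy (U := {u₁, u₂, u₃}) (W := {v₁, v₂, v₃})
    (by simp [*]) ⟨u₁, by simp⟩ ⟨v₁, by simp⟩
  have := hab u₁ (by simp) v₁ (by simp) s₁₁
  have := hab u₂ (by simp) v₂ (by simp) s₂₂
  have := hab u₃ (by simp) v₃ (by simp) s₃₃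
  grind [List.pairwise_cons]

def IsCompleteBigraph (G : SignedBigraph V) : Prop :=
  ∀ a b : V, G.side a ≠ G.side b → G.Adj a b

/-- The rank `(ρX x, ρY y)` of an edge `xy` with `x` on the `true` side; the value `(0, 0)` on
pairs from the same side only serves to make the function symmetric. -/
def lexRank (G : SignedBigraph V) (ρX ρY : V → ℕ) : Sym2 V → ℕ ×ₗ ℕ :=
  Sym2.lift ⟨fun u w =>
    if G.side u = G.side w then toLex (0, 0)
    else if G.side u then toLex (ρX u, ρY w) else toLex (ρX w, ρY u),
    fun u w => by cases hu : G.side u <;> cases hw : G.side w <;> simp [hu, hw]⟩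

lemma lexRank_mk {ρX ρY : V → ℕ} {x y : V} (hx : G.side x = true) (hy : G.side y = false) :
    G.lexRank ρX ρY s(x, y) = toLex (ρX x, ρY y) := by
  simp [lexRank, hx, hy]

lemma exists_oriented_of_adj {p q : V} (h : G.Adj p q) :
    ∃ x y, s(p, q) = s(x, y) ∧ G.side x = true ∧ G.side y = false ∧ G.Adj x y := by
  cases hp : G.side p
  · exact ⟨q, p, Sym2.eq_swap, by simpa [hp] using (G.bipartite h).symm, hp, h.symm⟩
  · exact ⟨p, q, rfl, hp, by simpa [hp] using (G.bipartite h).symm, h⟩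

lemma injOn_lexRank {ρX ρY : V → ℕ} (hX : ρX.Injective) (hY : ρY.Injective) :
    Set.InjOn (G.lexRank ρX ρY) G.graph.edgeSet := by
  intro e he e' he' h
  obtain ⟨p, q, rfl⟩ := Sym2.exists.mp ⟨e, rfl⟩
  obtain ⟨p', q', rfl⟩ := Sym2.exists.mp ⟨e', rfl⟩
  obtain ⟨x, y, hxy, hx, hy, -⟩ := exists_oriented_of_adj (G := G) he
  obtain ⟨x', y', hxy', hx', hy', -⟩ := exists_oriented_of_adj (G := G) he'
  rw [hxy, hxy', lexRank_mk hx hy, lexRank_mk hx' hy'] at h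
  simp only [toLex_inj, Prod.mk.injEq] at h
  rw [hxy, hxy', hX h.1, hY h.2]

/-- Deleting the edges in lexicographic order of `(ρX x, ρY y)`, an edge `xy` only sees
neighbours `c, d` with `ρX c > ρX x` and `ρY d > ρY y`; hence `cd` is still present, and it is
positive as long as every negative edge has an end of rank `0`. -/
lemma signedSimplicial_deleteEdges_lexRank (hG : G.IsCompleteBigraph) {ρX ρY : V → ℕ}
    (hX : ρX.Injective) (hY : ρY.Injective)
    (hcov : ∀ c d, G.side c = true → G.side d = false → G.sign c d = false →
      ρX c = 0 ∨ ρY d = 0)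
    {p q : V} (hpq : G.Adj p q) :
    (G.deleteEdges {e | G.lexRank ρX ρY e < G.lexRank ρX ρY s(p, q)}).SignedSimplicial p q := by
  obtain ⟨x, y, hxy, hx, hy, hadj⟩ := exists_oriented_of_adj hpq
  suffices h : (G.deleteEdges {e | G.lexRank ρX ρY e < G.lexRank ρX ρY s(x, y)}).SignedSimplicial
      x y by
    rcases Sym2.eq_iff.mp hxy with ⟨rfl, rfl⟩ | ⟨rfl, rfl⟩
    · exact h
    · rw [Sym2.eq_swap]; exact h.symm
  refine signedSimplicial_of_sides (deleteEdges_adj.mpr ⟨hadj, by simp⟩) ?_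
  rintro c ⟨hc, hcxy⟩ d ⟨hd, hdxy⟩ (hcs : G.side c = true) (hds : G.side d = false)
  simp only [Set.mem_insert_iff, Set.mem_singleton_iff, not_or] at hcxy hdxy
  have hyc : G.Adj y c ∧ ¬ G.lexRank ρX ρY s(y, c) < G.lexRank ρX ρY s(x, y) := by
    rcases hc with hc | hc
    · exact absurd (hx.trans hcs.symm) (G.bipartite (deleteEdges_adj.mp hc).1)
    · exact deleteEdges_adj.mp hc
  have hxd : G.Adj x d ∧ ¬ G.lexRank ρX ρY s(x, d) < G.lexRank ρX ρY s(x, y) := by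
    rcases hd with hd | hd
    · exact deleteEdges_adj.mp hd
    · exact absurd (hy.trans hds.symm) (G.bipartite (deleteEdges_adj.mp hd).1)
  rw [Sym2.eq_swap, lexRank_mk hcs hy, lexRank_mk hx hy, Prod.Lex.toLex_lt_toLex] at hyc
  rw [lexRank_mk hx hds, lexRank_mk hx hy, Prod.Lex.toLex_lt_toLex] at hxd
  have hc_lt : ρX x < ρX c := by
    have := hX.ne hcxy.1
    simp only [not_or, not_and, not_lt] at hyc
    omega
  have hd_lt : ρY y < ρY d := by
    have := hY.ne hdxy.2
    simp only [lt_irrefl, false_or, true_and, not_lt] at hxd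
    omega
  refine ⟨deleteEdges_adj.mpr ⟨hG c d (by simp [hcs, hds]), ?_⟩, ?_⟩
  · simp only [Set.mem_ofPred_eq, lexRank_mk hcs hds, lexRank_mk hx hy, Prod.Lex.toLex_lt_toLex]
    omega
  · show G.sign c d = true
    by_contra hneg
    rcases hcov c d hcs hds (by simpa using hneg) with h | h <;> omega

theorem isChordal_of_negCoveredBy [Finite V] (hG : G.IsCompleteBigraph) {a b : V}
    (hab : G.NegCoveredBy {v | G.side v = true} {v | G.side v = false} a b) :
    G.IsChordal := by
  classical
  obtain ⟨f, hf⟩ := Countable.exists_injective_nat V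
  let ρ : V → V → ℕ := fun c v => if v = c then 0 else f v + 1
  have hρ : ∀ c, (ρ c).Injective := by
    intro c v w h
    by_cases hv : v = c <;> by_cases hw : w = c <;> simp_all [ρ, hf.eq_iff]
  refine isChordal_of_rank (G.lexRank (ρ a) (ρ b)) (injOn_lexRank (hρ a) (hρ b))
    fun p q hpq => signedSimplicial_deleteEdges_lexRank hG (hρ a) (hρ b) ?_ hpq
  intro c d hc hd hneg
  rcases hab c hc d hd hneg with rfl | rfl
  exacts [Or.inl (by simp [ρ]), Or.inr (by simp [ρ])]

def negGraph (G : SignedBigraph V) : SimpleGraph V where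
  Adj a b := G.Adj a b ∧ G.sign a b = false
  symm := ⟨fun _ _ h => ⟨h.1.symm, G.sign_symm _ _ ▸ h.2⟩⟩
  loopless := ⟨fun _ h => h.1.ne rfl⟩

@[simp] lemma negGraph_adj {a b : V} : G.negGraph.Adj a b ↔ G.Adj a b ∧ G.sign a b = false :=
  Iff.rfl

lemma IsCompleteBigraph.adj_iff (hG : G.IsCompleteBigraph) {a b : V} :
    G.Adj a b ↔ G.side a ≠ G.side b :=
  ⟨fun h => G.bipartite h, hG a b⟩

lemma IsCompleteBigraph.hasF1 (hG : G.IsCompleteBigraph) {u₁ u₂ v₁ v₂ : V}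
    (hu : u₁ ≠ u₂) (hv : v₁ ≠ v₂)
    (h₁₁ : G.negGraph.Adj u₁ v₁) (h₁₂ : G.negGraph.Adj u₁ v₂)
    (h₂₁ : G.negGraph.Adj u₂ v₁) (h₂₂ : G.negGraph.Adj u₂ v₂) : G.HasF1 := by
  rw [negGraph_adj] at h₁₁ h₁₂ h₂₁ h₂₂
  obtain ⟨h₁₁, s₁₁⟩ := h₁₁; obtain ⟨h₁₂, s₁₂⟩ := h₁₂
  obtain ⟨h₂₁, s₂₁⟩ := h₂₁; obtain ⟨h₂₂, s₂₂⟩ := h₂₂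
  refine ⟨u₁, u₂, v₁, v₂, ?_, h₁₁, h₁₂, h₂₁, h₂₂, ?_, ?_, s₁₁, s₁₂, s₂₁, s₂₂⟩ <;>
  simp only [hG.adj_iff, List.pairwise_cons, ne_eq, ← Bool.eq_not_iff] at * <;> grind

lemma IsCompleteBigraph.hasF2 (hG : G.IsCompleteBigraph) {u₁ u₂ v₁ v₂ v₃ : V}
    (hu : u₁ ≠ u₂) (hv : [v₁, v₂, v₃].Pairwise (· ≠ ·))
    (h₁₁ : G.negGraph.Adj u₁ v₁) (h₁₂ : G.negGraph.Adj u₁ v₂)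
    (h₂₂ : G.negGraph.Adj u₂ v₂) (h₂₃ : G.negGraph.Adj u₂ v₃) : G.HasF2 := by
  rw [negGraph_adj] at h₁₁ h₁₂ h₂₂ h₂₃
  refine ⟨u₁, u₂, v₁, v₂, v₃, ?_, h₁₁.1, h₁₂.1, ?_, ?_, h₂₂.1, h₂₃.1, ?_, ?_, ?_, ?_,
    h₁₁.2, h₁₂.2, h₂₂.2, h₂₃.2⟩ <;>
  simp only [hG.adj_iff, List.pairwise_cons, ne_eq, ← Bool.eq_not_iff] at * <;> grind

lemma IsCompleteBigraph.hasF3 (hG : G.IsCompleteBigraph) {u₁ u₂ v₁ v₂ v₃ v₄ : V}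
    (hside : G.side u₁ = G.side u₂) (hu : u₁ ≠ u₂) (hv : [v₁, v₂, v₃, v₄].Pairwise (· ≠ ·))
    (h₁₁ : G.negGraph.Adj u₁ v₁) (h₁₂ : G.negGraph.Adj u₁ v₂)
    (h₂₃ : G.negGraph.Adj u₂ v₃) (h₂₄ : G.negGraph.Adj u₂ v₄) : G.HasF3 := by
  rw [negGraph_adj] at h₁₁ h₁₂ h₂₃ h₂₄
  refine ⟨u₁, u₂, v₁, v₂, v₃, v₄, ?_, h₁₁.1, h₁₂.1, ?_, ?_, ?_, ?_, h₂₃.1, h₂₄.1,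
    ?_, ?_, ?_, ?_, ?_, ?_, ?_, h₁₁.2, h₁₂.2, h₂₃.2, h₂₄.2⟩ <;>
  simp only [hG.adj_iff, List.pairwise_cons, ne_eq, ← Bool.eq_not_iff] at * <;> grind

lemma IsCompleteBigraph.hasF4 (hG : G.IsCompleteBigraph) {u₁ u₂ u₃ v₁ v₂ v₃ : V}
    (hside₂ : G.side u₁ = G.side u₂) (hside₃ : G.side u₁ = G.side u₃)
    (hu : [u₁, u₂, u₃].Pairwise (· ≠ ·)) (hv : [v₁, v₂, v₃].Pairwise (· ≠ ·))
    (h₁ : G.negGraph.Adj u₁ v₁) (h₂ : G.negGraph.Adj u₂ v₂) (h₃ : G.negGraph.Adj u₃ v₃) :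
    G.HasF4 := by
  rw [negGraph_adj] at h₁ h₂ h₃
  refine ⟨u₁, u₂, u₃, v₁, v₂, v₃, ?_, h₁.1, ?_, ?_, ?_, h₂.1, ?_, ?_, ?_, h₃.1,
    ?_, ?_, ?_, ?_, ?_, ?_, h₁.2, h₂.2, h₃.2⟩ <;>
  simp only [hG.adj_iff, List.pairwise_cons, ne_eq, ← Bool.eq_not_iff] at * <;> grind

lemma IsCompleteBigraph.not_nontrivial_negNbrs_pair (hG : G.IsCompleteBigraph)
    (hF1 : ¬ G.HasF1) (hF2 : ¬ G.HasF2) (hF3 : ¬ G.HasF3) {u₁ u₂ : V}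
    (hside : G.side u₁ = G.side u₂) (hu : u₁ ≠ u₂)
    (h₁ : (G.negGraph.neighborSet u₁).Nontrivial) (h₂ : (G.negGraph.neighborSet u₂).Nontrivial) :
    False := by
  obtain ⟨d₁, hd₁, d₂, hd₂, hd⟩ := h₁
  by_cases k₁ : d₁ ∈ G.negGraph.neighborSet u₂ <;> by_cases k₂ : d₂ ∈ G.negGraph.neighborSet u₂
  · exact hF1 (hG.hasF1 hu hd hd₁ hd₂ k₁ k₂)
  · obtain ⟨w, hw, hwd₁⟩ := h₂.exists_ne d₁
    have hwd₂ : w ≠ d₂ := by rintro rfl; exact k₂ hw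
    exact hF2 (hG.hasF2 hu (by simp [hd, hwd₁, hwd₂, Ne.symm]) hd₂ hd₁ k₁ hw)
  · obtain ⟨w, hw, hwd₂⟩ := h₂.exists_ne d₂
    have hwd₁ : w ≠ d₁ := by rintro rfl; exact k₁ hw
    exact hF2 (hG.hasF2 hu (by simp [hd, hwd₁, hwd₂, Ne.symm]) hd₁ hd₂ k₂ hw)
  · obtain ⟨e₁, he₁, e₂, he₂, he⟩ := h₂
    have hne : ∀ e ∈ G.negGraph.neighborSet u₂, d₁ ≠ e ∧ d₂ ≠ e :=
      fun e he => ⟨by rintro rfl; exact k₁ he, by rintro rfl; exact k₂ he⟩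
    exact hF3 (hG.hasF3 hside hu (by simp [hd, he, hne e₁ he₁, hne e₂ he₂]) hd₁ hd₂ he₁ he₂)

lemma IsCompleteBigraph.exists_negAdj_of_not_negCoveredBy (hG : G.IsCompleteBigraph) {a b : V}
    (h : ¬ G.NegCoveredBy {v | G.side v = true} {v | G.side v = false} a b) :
    ∃ x y, G.side x = true ∧ G.side y = false ∧ G.negGraph.Adj x y ∧ x ≠ a ∧ y ≠ b := by
  simp only [NegCoveredBy, Set.mem_ofPred_eq, not_forall, not_or] at h
  obtain ⟨x, hx, y, hy, hneg, hxa, hyb⟩ := h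
  exact ⟨x, y, hx, hy, ⟨hG x y (by simp [hx, hy]), hneg⟩, hxa, hyb⟩

lemma IsCompleteBigraph.negCoveredBy_of_nontrivial (hG : G.IsCompleteBigraph)
    (hF1 : ¬ G.HasF1) (hF2 : ¬ G.HasF2) (hF3 : ¬ G.HasF3) (hF4 : ¬ G.HasF4) {a b : V}
    (ha : G.side a = true) (hb : G.side b = false)
    (h_a : (G.negGraph.neighborSet a).Nontrivial) (h_b : (G.negGraph.neighborSet b).Nontrivial) :
    G.NegCoveredBy {v | G.side v = true} {v | G.side v = false} a b := by
  by_contra hno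
  obtain ⟨x, y, hx, hy, hxy, hxa, hyb⟩ := hG.exists_negAdj_of_not_negCoveredBy hno
  obtain ⟨d, hd : G.negGraph.Adj a d, hdb⟩ := h_a.exists_ne b
  obtain ⟨c, hc : G.negGraph.Adj b c, hca⟩ := h_b.exists_ne a
  have hdy : d ≠ y := by
    rintro rfl
    exact hG.not_nontrivial_negNbrs_pair hF1 hF2 hF3 (hy.trans hb.symm) hyb
      ⟨a, hd.symm, x, hxy.symm, hxa.symm⟩ h_b
  have hcx : c ≠ x := by
    rintro rfl
    exact hG.not_nontrivial_negNbrs_pair hF1 hF2 hF3 (hx.trans ha.symm) hxa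
      ⟨b, hc.symm, y, hxy, hyb.symm⟩ h_a
  have hc_side : G.side c = true := by simpa [hb] using (G.bipartite hc.1).symm
  exact hF4 (hG.hasF4 (ha.trans hc_side.symm) (ha.trans hx.symm)
    (by simp [hca.symm, hxa.symm, hcx]) (by simp [hdb, hdy, hyb.symm]) hd hc.symm hxy)

lemma IsCompleteBigraph.nontrivial_or_nontrivial_of_not_negCoveredBy (hG : G.IsCompleteBigraph)
    (hF4 : ¬ G.HasF4) {x₁ y₁ x₂ y₂ : V} (hx₁ : G.side x₁ = true) (hx₂ : G.side x₂ = true)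
    (h₁ : G.negGraph.Adj x₁ y₁) (h₂ : G.negGraph.Adj x₂ y₂) (hx : x₁ ≠ x₂) (hy : y₁ ≠ y₂)
    (hno : ¬ G.NegCoveredBy {v | G.side v = true} {v | G.side v = false} x₁ y₂) :
    (G.negGraph.neighborSet x₂).Nontrivial ∨ (G.negGraph.neighborSet y₁).Nontrivial := by
  obtain ⟨x, y, hxs, -, hxy, hxx₁, hyy₂⟩ := hG.exists_negAdj_of_not_negCoveredBy hno
  by_cases hxx₂ : x = x₂
  · subst hxx₂
    exact Or.inl ⟨y, hxy, y₂, h₂, hyy₂⟩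
  by_cases hyy₁ : y = y₁
  · subst hyy₁
    exact Or.inr ⟨x, hxy.symm, x₁, h₁.symm, hxx₁⟩
  exact (hF4 (hG.hasF4 (hx₁.trans hx₂.symm) (hx₁.trans hxs.symm)
    (by simp [hx, Ne.symm hxx₁, Ne.symm hxx₂]) (by simp [hy, Ne.symm hyy₁, Ne.symm hyy₂])
    h₁ h₂ hxy)).elim

/-- If no pair covers the negative edges, there are disjoint negative edges `x₁y₁`, `x₂y₂`, and
`nontrivial_or_nontrivial_of_not_negCoveredBy` applied to them in both orders gives one of them
whose two ends both have two negative neighbours; but those two ends do cover. -/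
theorem IsCompleteBigraph.exists_negCoveredBy [Nonempty V] (hG : G.IsCompleteBigraph)
    (hF : ¬ (G.HasF1 ∨ G.HasF2 ∨ G.HasF3 ∨ G.HasF4)) :
    ∃ a b, G.NegCoveredBy {v | G.side v = true} {v | G.side v = false} a b := by
  simp only [not_or] at hF
  obtain ⟨hF1, hF2, hF3, hF4⟩ := hF
  by_contra! hno
  have v : V := Classical.arbitrary V
  obtain ⟨x₁, y₁, hx₁, hy₁, h₁, -⟩ := hG.exists_negAdj_of_not_negCoveredBy (hno v v)
  obtain ⟨x₂, y₂, hx₂, hy₂, h₂, hx, hy⟩ := hG.exists_negAdj_of_not_negCoveredBy (hno x₁ y₁)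
  have k₁ := hG.nontrivial_or_nontrivial_of_not_negCoveredBy hF4 hx₁ hx₂ h₁ h₂
    (Ne.symm hx) (Ne.symm hy) (hno x₁ y₂)
  have k₂ := hG.nontrivial_or_nontrivial_of_not_negCoveredBy hF4 hx₂ hx₁ h₂ h₁ hx hy (hno x₂ y₁)
  have pair := @IsCompleteBigraph.not_nontrivial_negNbrs_pair _ _ hG hF1 hF2 hF3
  rcases k₁ with k₁ | k₁ <;> rcases k₂ with k₂ | k₂
  · exact pair (hx₂.trans hx₁.symm) hx k₁ k₂
  · exact hno x₂ y₂ (hG.negCoveredBy_of_nontrivial hF1 hF2 hF3 hF4 hx₂ hy₂ k₁ k₂)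
  · exact hno x₁ y₁ (hG.negCoveredBy_of_nontrivial hF1 hF2 hF3 hF4 hx₁ hy₁ k₂ k₁)
  · exact pair (hy₁.trans hy₂.symm) (Ne.symm hy) k₁ k₂

end SignedBigraph

open SignedBigraph in
/-- Theorem 2.2: a signed complete bigraph is chordal iff it
contains no member of `F₁ ∪ F₂ ∪ F₃ ∪ F₄` as an induced subgraph. -/
theorem signedCompleteBigraph_isChordal_iff_F
    {V : Type u} [Fintype V] (G : SignedBigraph V)
    (hcomp : ∀ a b : V, G.side a ≠ G.side b → G.Adj a b) :
    G.IsChordal ↔ ¬ (G.HasF1 ∨ G.HasF2 ∨ G.HasF3 ∨ G.HasF4) := by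
  refine ⟨fun hc hF => ?_, fun hF => ?_⟩
  · rcases hF with h | h | h | h
    exacts [hc.not_hasF1 h, hc.not_hasF2 h, hc.not_hasF3 h, hc.not_hasF4 h]
  · cases isEmpty_or_nonempty V
    · exact isChordal_of_isEmpty
    · obtain ⟨a, b, hab⟩ := IsCompleteBigraph.exists_negCoveredBy hcomp hF
      exact isChordal_of_negCoveredBy hcomp hab
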